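/- arXiv:1402.3628 — 4 statements merged into one kernel-verified Lean document; each statement's English description precedes it below -/
import Mathlib

section
/- Let k be a field, Q ∈ k[U] a polynomial of degree d ≥ 1 that splits over an algebraic closure with distinct roots (Q separable), and W ∈ k[U] a polynomial with deg W < d, viewed as an element of k[U]/(Q). Let T, S ∈ k[U] be the quotient and remainder of the Euclidean division of U·W·Q' by Q (where Q' is the formal derivative of Q). Then the sum of W(a) over all roots a of Q in the algebraic closure equals T(0). -/
open Polynomial

open scoped Classical

/-! Over the algebraic closure `Q = ∏ₐ (X - a)`, so `Q' = ∑ₐ Q / (X - a)`. Dividing,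
`X·W = (X - a)·qₐ + a·W(a)`, hence `X·W·Q' = Q·∑ₐ qₐ + ∑ₐ a·W(a)·Q / (X - a)`, and the last
sum has degree `< deg Q`. So `T = ∑ₐ qₐ`, and evaluating the division identity at `0` gives
`qₐ(0) = W(a)`. -/

namespace Polynomial

theorem X_mul_divByMonic_X_sub_C_eval_zero {R : Type*} [CommRing R] [IsDomain R]
    (p : R[X]) (a : R) : ((X * p) /ₘ (X - C a)).eval 0 = p.eval a := by
  have hdiv : X * p = (X - C a) * ((X * p) /ₘ (X - C a)) + C (a * p.eval a) := by
    have h := modByMonic_add_div (X * p) (X - C a)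
    rw [modByMonic_X_sub_C_eq_C_eval, eval_mul, eval_X] at h
    rw [add_comm, h]
  rcases eq_or_ne a 0 with rfl | ha
  · have hp : p = (X * p) /ₘ X := by simpa using hdiv
    simp [← hp]
  · have h0 := congrArg (eval 0) hdiv
    simp only [eval_mul, eval_add, eval_sub, eval_X, eval_C, zero_mul, zero_sub] at h0
    exact mul_left_cancel₀ ha (by linear_combination h0)

theorem Splits.nodal_roots_toFinset {R : Type*} [CommRing R] [IsDomain R] {f : R[X]}
    (hf : f.Splits) (hm : f.Monic) (hnd : f.roots.Nodup) :
    Lagrange.nodal f.roots.toFinset id = f := by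
  rw [Lagrange.nodal, Finset.prod_eq_multiset_prod, Multiset.toFinset_val, hnd.dedup]
  exact (hf.eq_prod_roots_of_monic hm).symm

end Polynomial

namespace Lagrange

variable {R ι : Type*} [CommRing R] [Nontrivial R]

theorem degree_sum_C_mul_nodal_erase_lt [DecidableEq ι] (s : Finset ι) (v c : ι → R) :
    (∑ i ∈ s, C (c i) * nodal (s.erase i) v).degree < (nodal s v).degree := by
  rw [degree_nodal]
  refine (degree_sum_le _ _).trans_lt ((Finset.sup_lt_iff (WithBot.bot_lt_coe _)).2 fun i hi => ?_)
  refine (C_mul' (c i) _ ▸ degree_smul_le (c i) _).trans_lt ?_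
  rw [degree_nodal, Finset.card_erase_of_mem hi]
  exact_mod_cast Nat.sub_lt (Finset.card_pos.2 ⟨i, hi⟩) one_pos

theorem mul_derivative_nodal_divByMonic (s : Finset ι) (v : ι → R) (g : R[X]) :
    (g * derivative (nodal s v)) /ₘ nodal s v = ∑ i ∈ s, g /ₘ (X - C (v i)) := by
  classical
  have hsplit : g * derivative (nodal s v) = ∑ i ∈ s, C (g.eval (v i)) * nodal (s.erase i) v +
      nodal s v * ∑ i ∈ s, g /ₘ (X - C (v i)) := by
    rw [derivative_nodal, Finset.mul_sum, Finset.mul_sum, ← Finset.sum_add_distrib]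
    refine Finset.sum_congr rfl fun i hi => ?_
    conv_lhs => rw [← modByMonic_add_div g (X - C (v i)), modByMonic_X_sub_C_eq_C_eval]
    rw [nodal_eq_mul_nodal_erase hi]
    ring
  exact (div_modByMonic_unique _ _ nodal_monic
    ⟨hsplit.symm, degree_sum_C_mul_nodal_erase_lt s v _⟩).1

end Lagrange

theorem sum_eval_roots_eq_quotient_eval_zero_general
    (k : Type*) [Field k] (Q W : k[X])
    (hQm : Q.Monic) (hQsep : Q.Separable)
    (T : k[X]) (hT : T = (X * W * derivative Q) /ₘ Q) :
    ∑ a ∈ (Q.aroots (AlgebraicClosure k)).toFinset, Polynomial.aeval a W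
      = algebraMap k (AlgebraicClosure k) (T.eval 0) := by
  set f := algebraMap k (AlgebraicClosure k)
  have hQ : Lagrange.nodal (Q.aroots (AlgebraicClosure k)).toFinset id = Q.map f :=
    (IsAlgClosed.splits _).nodal_roots_toFinset (hQm.map f) (nodup_roots hQsep.map)
  have hTmap : T.map f = ∑ a ∈ (Q.aroots (AlgebraicClosure k)).toFinset,
      (X * W.map f) /ₘ (X - C a) := by
    rw [hT, map_divByMonic f hQm, Polynomial.map_mul, Polynomial.map_mul, map_X,
      ← derivative_map, ← hQ]
    exact Lagrange.mul_derivative_nodal_divByMonic _ _ _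
  rw [← eval_zero_map, hTmap, eval_finsetSum]
  refine Finset.sum_congr rfl fun a _ => ?_
  rw [X_mul_divByMonic_X_sub_C_eval_zero, eval_map_algebraMap]

/-- Lemma (residue-sum lemma): for `Q` monic separable splitting with distinct roots over
the algebraic closure, `W` of degree `< deg Q`, and `T` the quotient of the Euclidean
division of `U·W·Q'` by `Q`, the sum of `W(a)` over the roots `a` of `Q` equals `T(0)`. -/
theorem sum_eval_roots_eq_quotient_eval_zero
    (k : Type*) [Field k] (Q W : k[X])
    (hQm : Q.Monic) (hQsep : Q.Separable) (hd : 1 ≤ Q.natDegree)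
    (hW : W.degree < Q.degree)
    (T : k[X]) (hT : T = (X * W * derivative Q) /ₘ Q) :
    ∑ a ∈ (Q.aroots (AlgebraicClosure k)).toFinset, Polynomial.aeval a W
      = algebraMap k (AlgebraicClosure k) (T.eval 0) :=
  sum_eval_roots_eq_quotient_eval_zero_general k Q W hQm hQsep T hT
end

section
/- Every positive integer ℓ can be written as a sum of four integer squares ℓ = a² + b² + c² + d²; moreover if ℓ > 1 the representation can be chosen such that a² + b² is not divisible by ℓ. -/
/-!
It suffices to write every `ℓ ≥ 2` as `a² + b² + c² + d²` with `a ≠ 0` and `c ≠ 0`: then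
`0 < a² + b² < ℓ`, so `ℓ ∤ a² + b²`. A Lagrange representation with two nonzero entries can be
permuted into this shape; one with a single nonzero entry only occurs for `ℓ = w²`. If `w = 2j`,
take `ℓ = j² + j² + j² + j²`. If `w` is odd, induct on `w = a² + b² + c² + d²` (with `a, c ≠ 0`)
and square it with Euler's identity
`(a² + b² + c² + d²)² = (a² - b² - c² - d²)² + (2ab)² + (2ac)² + (2ad)²`,
whose first term is odd, hence nonzero, and whose term `2ac` is nonzero.
-/

namespace Nat

theorem exists_sum_four_sq_two_ne_zero_or_eq_sq (n : ℕ) :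
    (∃ a b c d : ℕ, n = a ^ 2 + b ^ 2 + c ^ 2 + d ^ 2 ∧ a ≠ 0 ∧ c ≠ 0) ∨ ∃ w : ℕ, n = w ^ 2 := by
  obtain ⟨w, x, y, z, h⟩ := Nat.sum_four_squares n
  rcases eq_or_ne w 0 with hw | hw <;> rcases eq_or_ne x 0 with hx | hx <;>
    rcases eq_or_ne y 0 with hy | hy <;> rcases eq_or_ne z 0 with hz | hz <;>
    first
      | exact .inl ⟨w, x, y, z, h.symm, hw, hy⟩
      | exact .inl ⟨w, y, x, z, by rw [← h]; ring, hw, hx⟩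
      | exact .inl ⟨w, x, z, y, by rw [← h]; ring, hw, hz⟩
      | exact .inl ⟨x, w, y, z, by rw [← h]; ring, hx, hy⟩
      | exact .inl ⟨x, w, z, y, by rw [← h]; ring, hx, hz⟩
      | exact .inl ⟨y, w, z, x, by rw [← h]; ring, hy, hz⟩
      | exact .inr ⟨w, by rw [← h, hx, hy, hz]; ring⟩
      | exact .inr ⟨x, by rw [← h, hw, hy, hz]; ring⟩
      | exact .inr ⟨y, by rw [← h, hw, hx, hz]; ring⟩
      | exact .inr ⟨z, by rw [← h, hw, hx, hy]; ring⟩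

theorem sq_sum_four_sq (a b c d : ℕ) :
    (a ^ 2 + b ^ 2 + c ^ 2 + d ^ 2) ^ 2 =
      ((a : ℤ) ^ 2 - b ^ 2 - c ^ 2 - d ^ 2).natAbs ^ 2 + (2 * a * b) ^ 2 + (2 * a * c) ^ 2 +
        (2 * a * d) ^ 2 := by
  zify
  rw [sq_abs]
  ring

theorem natAbs_sq_sub_sq_sub_sq_sub_sq_ne_zero {a b c d : ℕ}
    (hodd : Odd (a ^ 2 + b ^ 2 + c ^ 2 + d ^ 2)) :
    ((a : ℤ) ^ 2 - b ^ 2 - c ^ 2 - d ^ 2).natAbs ≠ 0 := by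
  have hodd' : Odd ((a : ℤ) ^ 2 - b ^ 2 - c ^ 2 - d ^ 2) := by
    rw [show (a : ℤ) ^ 2 - b ^ 2 - c ^ 2 - d ^ 2 =
        ((a ^ 2 + b ^ 2 + c ^ 2 + d ^ 2 : ℕ) : ℤ) - 2 * (b ^ 2 + c ^ 2 + d ^ 2) by push_cast; ring]
    exact hodd.natCast.sub_even (even_two_mul _)
  exact (Int.natAbs_odd.mpr hodd').pos.ne'

theorem exists_sum_four_sq_two_ne_zero {n : ℕ} (hn : 2 ≤ n) :
    ∃ a b c d : ℕ, n = a ^ 2 + b ^ 2 + c ^ 2 + d ^ 2 ∧ a ≠ 0 ∧ c ≠ 0 := by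
  induction n using Nat.strong_induction_on with
  | _ n ih =>
  obtain h | ⟨w, rfl⟩ := exists_sum_four_sq_two_ne_zero_or_eq_sq n
  · exact h
  have hw : 2 ≤ w := by nlinarith
  obtain ⟨j, rfl⟩ | hodd := w.even_or_odd
  · exact ⟨j, j, j, j, by ring, by omega, by omega⟩
  obtain ⟨a, b, c, d, rfl, ha, hc⟩ := ih _ (by nlinarith) hw
  exact ⟨_, 2 * a * d, 2 * a * c, 2 * a * b, by rw [sq_sum_four_sq]; ring,
    natAbs_sq_sub_sq_sub_sq_sub_sq_ne_zero hodd, by positivity⟩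

end Nat

theorem four_squares_with_nondegeneracy_general
    (ℓ : ℕ) :
    ∃ a b c d : ℕ, ℓ = a ^ 2 + b ^ 2 + c ^ 2 + d ^ 2 ∧
      (1 < ℓ → ¬ (ℓ ∣ a ^ 2 + b ^ 2)) := by
  rcases le_or_gt ℓ 1 with hℓ | hℓ
  · obtain ⟨a, b, c, d, h⟩ := Nat.sum_four_squares ℓ
    exact ⟨a, b, c, d, h.symm, by omega⟩
  obtain ⟨a, b, c, d, h, ha, hc⟩ := Nat.exists_sum_four_sq_two_ne_zero hℓ
  have hpos : 0 < a ^ 2 + b ^ 2 := by positivity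
  have hlt : a ^ 2 + b ^ 2 < ℓ := by
    have : 0 < c ^ 2 := by positivity
    omega
  exact ⟨a, b, c, d, h, fun _ hdvd => hpos.ne' (Nat.eq_zero_of_dvd_of_lt hdvd hlt)⟩

/-- Lagrange four squares with a nondegeneracy condition: every positive integer `ℓ` is a
sum of four squares `a² + b² + c² + d²`, and if `ℓ > 1` one can choose the representation
so that `ℓ` does not divide `a² + b²`. -/
theorem four_squares_with_nondegeneracy
    (ℓ : ℕ) (hℓ : 0 < ℓ) :
    ∃ a b c d : ℕ, ℓ = a ^ 2 + b ^ 2 + c ^ 2 + d ^ 2 ∧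
      (1 < ℓ → ¬ (ℓ ∣ a ^ 2 + b ^ 2)) :=
  four_squares_with_nondegeneracy_general ℓ
end

section
/- Let ℓ = a² + b² + c² + d² with u := a² + b² invertible mod ℓ, and define α, β, γ, δ ∈ ℤ/ℓℤ by [[α, β], [γ, δ]] = u⁻¹·[[ac − db, ad + bc], [ad + bc, bd − ac]]. Then 1 + α² + γ² ≡ αβ + γδ ≡ 0 and 1 + β² + δ² ≡ 0 in ℤ/ℓℤ. -/
/-!
Write the numerator matrix as having columns `(x, y)`. By the Brahmagupta–Fibonacci identity each
column has `x² + y² = (a² + b²)(c² + d²)`, which is `-u²` modulo `ℓ`, so after scaling by `u⁻¹`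
each column has squared norm `-1`. The columns are orthogonal because the diagonal entries of the
numerator are negatives of each other.
-/

theorem one_add_sq_add_sq_eq_zero_of_add_eq_zero {R : Type*} [CommRing R] {u w v x y : R}
    (huv : u * v = 1) (huw : u + w = 0) (hxy : x ^ 2 + y ^ 2 = u * w) :
    1 + (v * x) ^ 2 + (v * y) ^ 2 = 0 := by
  linear_combination v ^ 2 * hxy + u * v ^ 2 * huw - (1 + u * v) * huv

theorem intCast_sq_add_sq_add_sq_add_sq_eq_zero {ℓ : ℕ} {a b c d : ℤ}
    (hℓ : (ℓ : ℤ) = a ^ 2 + b ^ 2 + c ^ 2 + d ^ 2) :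
    ((a : ZMod ℓ) ^ 2 + (b : ZMod ℓ) ^ 2) + ((c : ZMod ℓ) ^ 2 + (d : ZMod ℓ) ^ 2) = 0 := by
  have h := congrArg (Int.cast : ℤ → ZMod ℓ) hℓ
  push_cast at h
  rw [ZMod.natCast_self] at h
  linear_combination -h

/-- For `ℓ = a² + b² + c² + d²` with `u = a² + b²` invertible mod `ℓ`, the coefficients
`[[α,β],[γ,δ]] = u⁻¹·[[ac − db, ad + bc],[ad + bc, bd − ac]]` satisfy
`1 + α² + γ² ≡ 0`, `αβ + γδ ≡ 0` and `1 + β² + δ² ≡ 0` in `ℤ/ℓℤ`. -/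
theorem quaternion_coefficients_congruences
    (ℓ : ℕ) (a b c d : ℤ) (hℓ : (ℓ : ℤ) = a ^ 2 + b ^ 2 + c ^ 2 + d ^ 2)
    (hu : IsUnit ((a : ZMod ℓ) ^ 2 + (b : ZMod ℓ) ^ 2))
    (α β γ δ : ZMod ℓ)
    (hα : α = ((a : ZMod ℓ) ^ 2 + (b : ZMod ℓ) ^ 2)⁻¹ * ((a : ZMod ℓ) * c - d * b))
    (hβ : β = ((a : ZMod ℓ) ^ 2 + (b : ZMod ℓ) ^ 2)⁻¹ * ((a : ZMod ℓ) * d + b * c))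
    (hγ : γ = ((a : ZMod ℓ) ^ 2 + (b : ZMod ℓ) ^ 2)⁻¹ * ((a : ZMod ℓ) * d + b * c))
    (hδ : δ = ((a : ZMod ℓ) ^ 2 + (b : ZMod ℓ) ^ 2)⁻¹ * ((b : ZMod ℓ) * d - a * c)) :
    1 + α ^ 2 + γ ^ 2 = 0 ∧ α * β + γ * δ = 0 ∧ 1 + β ^ 2 + δ ^ 2 = 0 := by
  have huv := ZMod.mul_inv_of_unit _ hu
  have hsum := intCast_sq_add_sq_add_sq_add_sq_eq_zero hℓ
  subst hα hβ hγ hδ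
  refine ⟨one_add_sq_add_sq_eq_zero_of_add_eq_zero huv hsum ?_, by ring,
    one_add_sq_add_sq_eq_zero_of_add_eq_zero huv hsum ?_⟩
  · linear_combination -sq_add_sq_mul_sq_add_sq (x₁ := (a : ZMod ℓ)) (x₂ := b) (y₁ := c) (y₂ := d)
  · linear_combination -sq_add_sq_mul_sq_add_sq (x₁ := (a : ZMod ℓ)) (x₂ := b) (y₁ := c) (y₂ := d)
end

section
/- Let q be a prime power and H ⊆ ℙ^{N}(𝔽_q) an algebraic hypersurface of degree δ (zero set of a nonzero homogeneous polynomial of degree δ in N+1 variables). Then #H(𝔽_q) ≤ δ·q^{N−1} + Π_{N−2}, where Π_m = (q^{m+1} − 1)/(q − 1) is the number of 𝔽_q-points of ℙ^m. In particular, if δ·q^{N−1} + Π_{N−2} < Π_N then there exists a point of ℙ^N(𝔽_q) not lying on H. -/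
/-!
Pass to the affine cone: the zero set `Z ⊆ 𝔽_q^{N+1}` of `f` has `(q - 1)·#H + 1` points,
and the bound becomes `q·#Z ≤ q^N·((q - 1)δ + 1)`. This is trivial for `δ > q`; for `δ ≤ q`
it is proved by induction on `N`. If `f` vanishes on a hyperplane, move it to `x₀ = 0`: the
part of `f` free of `x₀` is a form of degree `δ ≤ q` vanishing on all of `𝔽_q^N`, hence zero,
so `f(1, ·)` has degree `≤ δ - 1` and Schwartz–Zippel bounds each of the `q - 1` slices
`x₀ = c ≠ 0`. Otherwise every hyperplane section of `Z` is the zero set of a nonzero form in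
one variable less, and double counting incidences between the nonzero points of `Z` and the
hyperplanes through them closes the induction, thanks to `(q - 1)δ + 1 ≤ q²`.
-/

open MvPolynomial Finset Matrix

theorem exists_linearEquiv_dotProduct_eq_apply_zero {F : Type*} [Field F] {n : ℕ}
    {a : Fin (n + 1) → F} (ha : a ≠ 0) :
    ∃ φ : (Fin (n + 1) → F) ≃ₗ[F] (Fin (n + 1) → F), ∀ w, a ⬝ᵥ φ w = w 0 := by
  obtain ⟨i, hi⟩ := Function.ne_iff.mp ha
  set ℓ := dotProductBilin F F a
  set u : Fin (n + 1) → F := Pi.single i (a i)⁻¹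
  have hu : ℓ u = 1 := by simp [ℓ, u, dotProduct_single, mul_inv_cancel₀ hi]
  have hℓ : Function.Surjective ℓ := fun c => ⟨c • u, by simp [hu]⟩
  have hker : Module.finrank F (LinearMap.ker ℓ) = n := by
    have := LinearMap.finrank_range_add_finrank_ker ℓ
    rw [LinearMap.range_eq_top.mpr hℓ, finrank_top, Module.finrank_self,
      Module.finrank_fin_fun] at this
    omega
  let B := Module.Basis.mkFinCons u (Module.finBasisOfFinrankEq F _ hker)
    (fun c x hx h => by simpa [hu, LinearMap.mem_ker.mp hx] using congrArg ℓ h)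
    (fun z => ⟨-ℓ z, by simp [hu]⟩)
  have hB : ∀ j, ℓ (B j) = if j = 0 then 1 else 0 := fun j =>
    Fin.cases (by simp [B, hu]) (fun j => by simp [B]) j
  refine ⟨B.equivFun.symm, fun w => ?_⟩
  rw [Module.Basis.equivFun_symm_apply]
  change ℓ (∑ j, w j • B j) = w 0
  simp [map_sum, hB]

theorem card_filter_and_apply_zero_eq {α : Type*} [Fintype α] [DecidableEq α] {n : ℕ} (c : α)
    (p : (Fin (n + 1) → α) → Prop) [DecidablePred p] :
    #{v | p v ∧ v 0 = c} = #{w | p (Fin.cons c w)} := by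
  refine card_nbij' Fin.tail (fun w => Fin.cons c w) ?_ ?_ ?_ ?_ <;> intro v hv <;>
    simp only [coe_filter, Set.mem_ofPred_eq, mem_univ, true_and] at hv
  · simpa [← hv.2] using hv.1
  · simpa using hv
  · simp [← hv.2]
  · simp

namespace MvPolynomial

theorem IsHomogeneous.eval_smul {R σ : Type*} [CommSemiring R] {f : MvPolynomial σ R} {d : ℕ}
    (hf : f.IsHomogeneous d) (c : R) (v : σ → R) : eval (c • v) f = c ^ d * eval v f := by
  simp only [eval_eq, mul_sum, Pi.smul_apply, smul_eq_mul, mul_pow, prod_mul_distrib,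
    prod_pow_eq_pow_sum]
  refine sum_congr rfl fun μ hμ => ?_
  have hμd : ∑ i ∈ μ.support, μ i = d := by
    simpa [Finsupp.weight_apply, Finsupp.sum] using hf (mem_support_iff.mp hμ)
  rw [hμd]
  ring

theorem IsHomogeneous.eval_zero {R σ : Type*} [CommSemiring R] {f : MvPolynomial σ R} {d : ℕ}
    (hf : f.IsHomogeneous d) (hd : d ≠ 0) : eval 0 f = 0 := by
  simpa [hd] using hf.eval_smul 0 0

theorem IsHomogeneous.exists_comp_linearMap {R ι κ : Type*} [CommRing R] [Fintype κ]
    [DecidableEq κ] {f : MvPolynomial ι R} {d : ℕ} (hf : f.IsHomogeneous d)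
    (φ : (κ → R) →ₗ[R] (ι → R)) :
    ∃ g : MvPolynomial κ R, g.IsHomogeneous d ∧ ∀ w, eval w g = eval (φ w) f := by
  refine ⟨bind₁ (LinearMap.toMatrix' φ).toMvPolynomial f, ?_, fun w => ?_⟩
  · have := hf.aeval _ (toMvPolynomial_isHomogeneous (LinearMap.toMatrix' φ))
    rwa [one_mul, aeval_eq_bind₁] at this
  · simp only [eval, eval₂Hom_bind₁]
    simp [toMvPolynomial_eval_eq_apply]

section finSuccEquiv

variable {R : Type*} [CommSemiring R] {n : ℕ}

theorem eval_coeff_zero_finSuccEquiv (f : MvPolynomial (Fin (n + 1)) R) (w : Fin n → R) :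
    eval w ((finSuccEquiv R n f).coeff 0) = eval (Fin.cons 0 w) f := by
  rw [eval_eq_eval_mv_eval', ← Polynomial.coeff_zero_eq_eval_zero, Polynomial.coeff_map]

theorem eval_eval_one_finSuccEquiv (f : MvPolynomial (Fin (n + 1)) R) (w : Fin n → R) :
    eval w ((finSuccEquiv R n f).eval 1) = eval (Fin.cons 1 w) f := by
  rw [eval_eq_eval_mv_eval', Polynomial.eval_one_map]

theorem IsHomogeneous.totalDegree_eval_one_finSuccEquiv_le {f : MvPolynomial (Fin (n + 1)) R}
    {d : ℕ} (hf : f.IsHomogeneous d) (h0 : (finSuccEquiv R n f).coeff 0 = 0) :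
    ((finSuccEquiv R n f).eval 1).totalDegree ≤ d - 1 := by
  rw [Polynomial.eval_eq_sum, Polynomial.sum_def]
  refine (totalDegree_finsetSum _ _).trans (Finset.sup_le fun k hk => ?_)
  have hk0 : k ≠ 0 := by
    rintro rfl
    exact Polynomial.mem_support_iff.mp hk h0
  have hkd : k ≤ d := (Polynomial.le_natDegree_of_mem_supp k hk).trans <| by
    rw [natDegree_finSuccEquiv]
    exact (degreeOf_le_totalDegree f 0).trans hf.totalDegree_le
  rw [one_pow, mul_one]
  exact (hf.finSuccEquiv_coeff_isHomogeneous k (d - k) (by omega)).totalDegree_le.trans (by omega)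

end finSuccEquiv

section Field

variable {F : Type*} [Field F]

theorem IsHomogeneous.eval_cons_eq_pow_mul {n d : ℕ} {f : MvPolynomial (Fin (n + 1)) F}
    (hf : f.IsHomogeneous d) {c : F} (hc : c ≠ 0) (w : Fin n → F) :
    eval (Fin.cons c w) f = c ^ d * eval (Fin.cons 1 (c⁻¹ • w)) f := by
  have hcw : (Fin.cons c w : Fin (n + 1) → F) = c • Fin.cons 1 (c⁻¹ • w) := by
    ext i
    cases i using Fin.cases <;> simp [hc]
  rw [hcw, hf.eval_smul]

theorem IsHomogeneous.eval_rep_mk_eq_zero_iff {ι : Type*} {f : MvPolynomial ι F} {d : ℕ}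
    (hf : f.IsHomogeneous d) {v : ι → F} (hv : v ≠ 0) :
    eval (Projectivization.mk F v hv).rep f = 0 ↔ eval v f = 0 := by
  obtain ⟨c, hc⟩ := Projectivization.exists_smul_eq_mk_rep F v hv
  rw [← hc, Units.smul_def, hf.eval_smul, mul_eq_zero, or_iff_right (pow_ne_zero _ c.ne_zero)]

theorem IsHomogeneous.exists_comp_equiv_dotProduct_eq_apply_zero {n d : ℕ}
    {f : MvPolynomial (Fin (n + 1)) F} (hf : f.IsHomogeneous d) {a : Fin (n + 1) → F}
    (ha : a ≠ 0) :
    ∃ (φ : (Fin (n + 1) → F) ≃ (Fin (n + 1) → F)) (g : MvPolynomial (Fin (n + 1)) F),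
      g.IsHomogeneous d ∧ (∀ w, eval w g = eval (φ w) f) ∧ ∀ w, a ⬝ᵥ φ w = w 0 := by
  obtain ⟨φ, hφ⟩ := exists_linearEquiv_dotProduct_eq_apply_zero ha
  obtain ⟨g, hg, hgφ⟩ := hf.exists_comp_linearMap φ.toLinearMap
  exact ⟨φ.toEquiv, g, hg, hgφ, hφ⟩

end Field

end MvPolynomial

section FiniteField

variable {F : Type*} [Field F] [Fintype F] [DecidableEq F]

local notation "q" => Fintype.card F

theorem card_zeros_mul_le_totalDegree {n : ℕ} {p : MvPolynomial (Fin n) F} (hp : p ≠ 0) :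
    q * #{w | eval w p = 0} ≤ p.totalDegree * q ^ n := by
  have hq : (0 : ℚ≥0) < q := by exact_mod_cast Fintype.card_pos
  have := schwartz_zippel_totalDegree hp univ
  rw [Fintype.piFinset_univ, card_univ, div_le_div_iff₀ (by positivity) hq] at this
  rw [mul_comm]
  exact_mod_cast this

theorem card_dotProduct_eq_zero {n : ℕ} {a : Fin (n + 1) → F} (ha : a ≠ 0) :
    #{v | a ⬝ᵥ v = 0} = q ^ n := by
  obtain ⟨φ, hφ⟩ := exists_linearEquiv_dotProduct_eq_apply_zero ha
  have := card_filter_and_apply_zero_eq (0 : F) (fun _ : Fin (n + 1) → F => True)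
  rw [card_equiv φ.toEquiv.symm (t := {w | a ⬝ᵥ φ w = 0}) (by simp)]
  simpa [hφ] using this

theorem card_eval_cons_eq_zero {n d : ℕ} {f : MvPolynomial (Fin (n + 1)) F}
    (hf : f.IsHomogeneous d) {c : F} (hc : c ≠ 0) :
    #{w | eval (Fin.cons c w) f = 0} = #{w | eval (Fin.cons 1 w) f = 0} := by
  refine card_nbij' (c⁻¹ • ·) (c • ·) ?_ ?_ ?_ ?_ <;> intro w hw <;>
    simp_all [hf.eval_cons_eq_pow_mul hc, smul_smul]

theorem card_zeros_mul_le_of_forall_eval_cons_zero {n d : ℕ}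
    {f : MvPolynomial (Fin (n + 1)) F} (hf : f.IsHomogeneous d) (hd : 0 < d) (hdq : d ≤ q)
    (hvan : ∀ w, eval (Fin.cons 0 w) f = 0) (hne : ∃ v, eval v f ≠ 0) :
    (q : ℚ) * #{v | eval v f = 0} ≤ q ^ n * ((q - 1) * d + 1) := by
  have hP0 : (finSuccEquiv F n f).coeff 0 = 0 :=
    (hf.finSuccEquiv_coeff_isHomogeneous 0 d (zero_add d)).eq_zero_of_forall_eval_eq_zero_of_le_card
      (fun w => by rw [eval_coeff_zero_finSuccEquiv, hvan]) (by simpa using hdq)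
  have hp : (finSuccEquiv F n f).eval 1 ≠ 0 := by
    obtain ⟨v, hv⟩ := hne
    have hv0 : v 0 ≠ 0 := fun h => hv (by simpa [← h] using hvan (Fin.tail v))
    intro hp
    apply hv
    rw [← Fin.cons_self_tail v, hf.eval_cons_eq_pow_mul hv0, ← eval_eval_one_finSuccEquiv, hp,
      map_zero, mul_zero]
  have hSZ := card_zeros_mul_le_totalDegree hp
  simp only [eval_eval_one_finSuccEquiv] at hSZ
  set t := #{w | eval (Fin.cons 1 w) f = 0}
  have hcount : #{v | eval v f = 0} = q ^ n + (q - 1) * t := by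
    rw [card_eq_sum_card_fiberwise (f := fun v => v 0) (t := univ) (fun _ _ => mem_univ _),
      ← add_sum_erase _ _ (mem_univ 0)]
    simp only [filter_filter, card_filter_and_apply_zero_eq (p := fun v => eval v f = 0)]
    rw [sum_congr rfl fun c hc => card_eval_cons_eq_zero hf (ne_of_mem_erase hc)]
    simp [hvan, card_erase_of_mem, t]
  have ht : (q : ℚ) * t ≤ (d - 1) * q ^ n := by
    rw [← Nat.cast_pred hd]
    exact_mod_cast hSZ.trans (Nat.mul_le_mul_right _ (hf.totalDegree_eval_one_finSuccEquiv_le hP0))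
  have hq : (1 : ℚ) ≤ q := by exact_mod_cast Fintype.card_pos
  calc (q : ℚ) * #{v | eval v f = 0} = q * q ^ n + (q - 1) * (q * t) := by
        rw [hcount]
        push_cast [Nat.cast_sub Fintype.card_pos]
        ring
    _ ≤ q * q ^ n + (q - 1) * ((d - 1) * q ^ n) := by gcongr
    _ = q ^ n * ((q - 1) * d + 1) := by ring

theorem card_zeros_mul_le_of_forall_dotProduct_eq_zero {n d : ℕ}
    {f : MvPolynomial (Fin (n + 1)) F} (hf : f.IsHomogeneous d) (hd : 0 < d) (hdq : d ≤ q)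
    {a : Fin (n + 1) → F} (ha : a ≠ 0) (hvan : ∀ v, a ⬝ᵥ v = 0 → eval v f = 0)
    (hne : ∃ v, eval v f ≠ 0) :
    (q : ℚ) * #{v | eval v f = 0} ≤ q ^ n * ((q - 1) * d + 1) := by
  obtain ⟨φ, g, hg, hgφ, hφ⟩ := hf.exists_comp_equiv_dotProduct_eq_apply_zero ha
  rw [card_equiv φ.symm (t := {w | eval w g = 0}) (by simp [hgφ])]
  refine card_zeros_mul_le_of_forall_eval_cons_zero hg hd hdq (fun w => ?_) ?_
  · rw [hgφ]
    exact hvan _ (by simp [hφ])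
  · obtain ⟨v, hv⟩ := hne
    exact ⟨φ.symm v, by simpa [hgφ] using hv⟩

theorem MvPolynomial.IsHomogeneous.exists_card_zeros_dotProduct_eq {n d : ℕ}
    {f : MvPolynomial (Fin (n + 1)) F} (hf : f.IsHomogeneous d) {a : Fin (n + 1) → F}
    (ha : a ≠ 0) :
    ∃ g : MvPolynomial (Fin n) F, g.IsHomogeneous d ∧
      #{v | eval v f = 0 ∧ a ⬝ᵥ v = 0} = #{w | eval w g = 0} ∧
      ∀ v, a ⬝ᵥ v = 0 → ∃ w, eval w g = eval v f := by
  obtain ⟨φ, g, hg, hgφ, hφ⟩ := hf.exists_comp_equiv_dotProduct_eq_apply_zero ha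
  refine ⟨(finSuccEquiv F n g).coeff 0, hg.finSuccEquiv_coeff_isHomogeneous 0 d (zero_add d),
    ?_, fun v hv => ⟨Fin.tail (φ.symm v), ?_⟩⟩
  · rw [card_equiv φ.symm (t := {w | eval w g = 0 ∧ w 0 = 0}) (fun v => by simp [hgφ, ← hφ]),
      card_filter_and_apply_zero_eq (p := fun w => eval w g = 0)]
    simp only [eval_coeff_zero_finSuccEquiv]
  · have h0 : φ.symm v 0 = 0 := by rw [← hφ (φ.symm v), φ.apply_symm_apply, hv]
    have hcons : Fin.cons 0 (Fin.tail (φ.symm v)) = φ.symm v := by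
      rw [← h0, Fin.cons_self_tail]
    simp [eval_coeff_zero_finSuccEquiv, hcons, hgφ]

theorem card_mul_le_of_forall_card_dotProduct_mul_le {m : ℕ} (p : (Fin (m + 2) → F) → Prop)
    [DecidablePred p] (h0 : p 0) {D : ℚ} (hD : D ≤ q ^ 2)
    (hsec : ∀ a ≠ 0, (q : ℚ) * #{v | p v ∧ a ⬝ᵥ v = 0} ≤ q ^ m * D) :
    (q : ℚ) * #{v | p v} ≤ q ^ (m + 1) * D := by
  have hq : (2 : ℚ) ≤ q := by exact_mod_cast Fintype.one_lt_card
  have h0mem : (0 : Fin (m + 2) → F) ∈ ({v | p v} : Finset _) := by simpa using h0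
  have hdc := card_nsmul_le_card_nsmul (R := ℚ) (fun v (a : Fin (m + 2) → F) => a ⬝ᵥ v = 0)
    (s := ({v | p v} : Finset _).erase 0) (t := univ.erase 0) (m := q ^ (m + 1) - 1)
    (n := q ^ m * D / q - 1) ?_ ?_
  · rw [nsmul_eq_mul, nsmul_eq_mul, card_erase_of_mem h0mem, card_erase_of_mem (mem_univ _),
      Nat.cast_sub (card_pos.mpr ⟨0, h0mem⟩), card_univ, Fintype.card_fun, Fintype.card_fin,
      Nat.cast_sub (Nat.one_le_pow _ _ Fintype.card_pos)] at hdc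
    push_cast at hdc
    have he : (1 : ℚ) ≤ q ^ m := one_le_pow₀ (by linarith)
    rw [show (q : ℚ) ^ (m + 2) = q ^ 2 * q ^ m by ring, pow_succ'] at hdc
    rw [pow_succ']
    generalize (q : ℚ) ^ m = e at he hdc ⊢
    field_simp at hdc
    by_contra! h
    have hqe : 0 < (q : ℚ) * e - 1 := by nlinarith
    -- the double count misses the claim by exactly `e (q - 1) (q² - D) ≥ 0`
    nlinarith [mul_pos (sub_pos.mpr h) hqe, mul_nonneg (mul_nonneg (by linarith : (0 : ℚ) ≤ e)
      (by linarith : (0 : ℚ) ≤ q - 1)) (by linarith : 0 ≤ (q : ℚ) ^ 2 - D)]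
  · intro v hv
    have hcard : #{a | a ⬝ᵥ v = 0} = q ^ (m + 1) := by
      simpa only [dotProduct_comm] using card_dotProduct_eq_zero (ne_of_mem_erase hv)
    rw [bipartiteAbove, filter_erase, card_erase_of_mem (by simp), hcard,
      Nat.cast_sub (Nat.one_le_pow _ _ Fintype.card_pos)]
    push_cast
    rfl
  · intro a ha
    rw [bipartiteBelow, filter_erase, filter_filter, card_erase_of_mem (by simpa using h0),
      Nat.cast_sub (card_pos.mpr ⟨0, by simpa using h0⟩), Nat.cast_one, sub_le_sub_iff_right,
      le_div_iff₀' (by linarith)]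
    exact hsec a (ne_of_mem_erase ha)

theorem card_zeros_mul_le_of_le_card {n d : ℕ} {f : MvPolynomial (Fin (n + 1)) F}
    (hf : f.IsHomogeneous d) (hd : 0 < d) (hdq : d ≤ q) (hne : ∃ v, eval v f ≠ 0) :
    (q : ℚ) * #{v | eval v f = 0} ≤ q ^ n * ((q - 1) * d + 1) := by
  induction n generalizing d with
  | zero =>
    refine card_zeros_mul_le_of_forall_eval_cons_zero hf hd hdq (fun w => ?_) hne
    rw [show (Fin.cons 0 w : Fin 1 → F) = 0 from funext (Fin.cases rfl finZeroElim)]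
    exact hf.eval_zero hd.ne'
  | succ m ih =>
    by_cases hA : ∃ a ≠ 0, ∀ v, a ⬝ᵥ v = 0 → eval v f = 0
    · obtain ⟨a, ha, hvan⟩ := hA
      exact card_zeros_mul_le_of_forall_dotProduct_eq_zero hf hd hdq ha hvan hne
    push Not at hA
    have hq : (1 : ℚ) ≤ q := by exact_mod_cast Fintype.card_pos
    have hdq' : (d : ℚ) ≤ q := by exact_mod_cast hdq
    refine card_mul_le_of_forall_card_dotProduct_mul_le _ (hf.eval_zero hd.ne') (by nlinarith)
      fun a ha => ?_
    obtain ⟨g, hg, hcard, hgf⟩ := hf.exists_card_zeros_dotProduct_eq ha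
    obtain ⟨v, hva, hv⟩ := hA a ha
    obtain ⟨w, hw⟩ := hgf v hva
    rw [hcard]
    exact ih hg hd hdq ⟨w, hw ▸ hv⟩

theorem card_zeros_mul_le {n d : ℕ} {f : MvPolynomial (Fin (n + 1)) F}
    (hf : f.IsHomogeneous d) (hd : 0 < d) (hf0 : f ≠ 0) :
    (q : ℚ) * #{v | eval v f = 0} ≤ q ^ n * ((q - 1) * d + 1) := by
  by_cases hdq : d ≤ q
  · refine card_zeros_mul_le_of_le_card hf hd hdq ?_
    by_contra! h
    exact hf0 (hf.eq_zero_of_forall_eval_eq_zero_of_le_card h (by simpa using hdq))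
  have hq : (1 : ℚ) ≤ q := by exact_mod_cast Fintype.card_pos
  have hdq' : (q : ℚ) + 1 ≤ d := by exact_mod_cast not_le.mp hdq
  have hcard : (#{v | eval v f = 0} : ℚ) ≤ q ^ (n + 1) := by
    exact_mod_cast (card_filter_le _ _).trans (by simp)
  calc (q : ℚ) * #{v | eval v f = 0} ≤ q * q ^ (n + 1) := by gcongr
    _ = q ^ n * ((q - 1) * (q + 1) + 1) := by ring
    _ ≤ q ^ n * ((q - 1) * d + 1) := by gcongr

theorem card_zeros_eq_card_projectivization_zeros {ι : Type*} [Fintype ι] [DecidableEq ι]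
    {f : MvPolynomial ι F} {d : ℕ} (hf : f.IsHomogeneous d) (hd : d ≠ 0) :
    #{v | eval v f = 0} =
      (q - 1) * Nat.card {x : Projectivization F (ι → F) // eval x.rep f = 0} + 1 := by
  let E : {v : {v : ι → F // v ≠ 0} // eval v.1 f = 0} ≃
      {x : Projectivization F (ι → F) × Fˣ // eval x.1.rep f = 0} :=
    (Projectivization.nonZeroEquivProjectivizationProdUnits F (ι → F)).subtypeEquiv
      fun v => (hf.eval_rep_mk_eq_zero_iff v.2).symm
  have h := Nat.card_congr ((Equiv.subtypeSubtypeEquivSubtypeInter (· ≠ 0)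
    fun v : ι → F => eval v f = 0).symm.trans (E.trans (Equiv.prodSubtypeFstEquivSubtypeProd
    (p := fun x : Projectivization F (ι → F) => eval x.rep f = 0))))
  rw [Nat.card_prod, Nat.card_units, Nat.card_eq_fintype_card (α := F), mul_comm,
    Nat.card_eq_fintype_card, Fintype.card_subtype] at h
  rw [← h, ← card_erase_add_one (s := {v | eval v f = 0}) (mem_filter.mpr ⟨mem_univ _,
    hf.eval_zero hd⟩), ← filter_ne', filter_filter]
  simp_rw [and_comm]

theorem card_projectivization_zeros_le {n d : ℕ} {f : MvPolynomial (Fin (n + 2)) F}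
    (hf : f.IsHomogeneous d) (hd : 0 < d) (hf0 : f ≠ 0) :
    Nat.card {x : Projectivization F (Fin (n + 2) → F) // eval x.rep f = 0}
      ≤ d * q ^ n + ∑ i ∈ range n, q ^ i := by
  have hZ := card_zeros_mul_le hf hd hf0
  rw [card_zeros_eq_card_projectivization_zeros hf hd.ne'] at hZ
  set P := Nat.card {x : Projectivization F (Fin (n + 2) → F) // eval x.rep f = 0}
  have hq : (2 : ℚ) ≤ q := by exact_mod_cast Fintype.one_lt_card
  push_cast [Nat.cast_sub Fintype.card_pos] at hZ
  rw [pow_succ', mul_assoc] at hZ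
  have h1 := le_of_mul_le_mul_left hZ (by linarith)
  have hgeom := geom_sum_mul (q : ℚ) n
  have h2 : ((q : ℚ) - 1) * P ≤ (q - 1) * (d * q ^ n + ∑ i ∈ range n, (q : ℚ) ^ i) := by
    linarith
  exact_mod_cast le_of_mul_le_mul_left h2 (by linarith)

end FiniteField

/-- Serre's bound: a hypersurface `H ⊆ ℙ^N(𝔽_q)` of degree `δ` (zero locus of a nonzero
homogeneous polynomial of degree `δ`) has at most `δ·q^{N−1} + Π_{N−2}` rational points,
where `Π_m = 1 + q + ⋯ + q^m`. In particular if this bound is `< Π_N` then some point of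
`ℙ^N(𝔽_q)` is not on `H`. (Vanishing of a homogeneous polynomial at a projective point is
tested on the chosen representative `x.rep`, which is independent of the choice.) -/
theorem serre_hypersurface_bound
    (F : Type*) [Field F] [Fintype F] (q : ℕ) (hq : q = Fintype.card F)
    (N δ : ℕ) (hN : 2 ≤ N) (hδ : 0 < δ)
    (f : MvPolynomial (Fin (N + 1)) F) (hf : f ≠ 0) (hhom : f.IsHomogeneous δ) :
    Nat.card {x : Projectivization F (Fin (N + 1) → F) // MvPolynomial.eval x.rep f = 0}
      ≤ δ * q ^ (N - 1) + ∑ i ∈ Finset.range (N - 1), q ^ i ∧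
    (δ * q ^ (N - 1) + ∑ i ∈ Finset.range (N - 1), q ^ i
        < ∑ i ∈ Finset.range (N + 1), q ^ i →
      ∃ x : Projectivization F (Fin (N + 1) → F), MvPolynomial.eval x.rep f ≠ 0) := by
  classical
  subst hq
  obtain ⟨n, rfl⟩ : ∃ n, N = n + 1 := ⟨N - 1, by omega⟩
  rw [Nat.add_sub_cancel]
  have hbound : Nat.card {x : Projectivization F (Fin (n + 1 + 1) → F) // eval x.rep f = 0}
      ≤ δ * Fintype.card F ^ n + ∑ i ∈ range n, Fintype.card F ^ i :=
    card_projectivization_zeros_le hhom hδ hf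
  refine ⟨hbound, fun hlt => ?_⟩
  by_contra! hall
  rw [Nat.card_congr (Equiv.subtypeUnivEquiv hall),
    Projectivization.card_of_finrank F _ (Module.finrank_fin_fun F), Nat.card_eq_fintype_card]
    at hbound
  omega
end
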